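/- Let α > 1/2 and set γ(α) = α/(2α−1) and z(y,α) = y²(2α−1)/2. Then lim_{y → 0⁺} [ α·y²·U(γ(α)+1, 5/2, z(y,α)) − U(γ(α), 3/2, z(y,α)) ] = 2√π / Γ(γ(α) − 1/2). -/

import Mathlib

/-!
With `z = y²(2α-1)/2` and `γ = α/(2α-1)` one has `αy² = 2γz`. By the connection formula defining
`U`, the quantity `2γz·U(γ+1, 5/2, z) - U(γ, 3/2, z)` equals
`2γΓ(-3/2)/Γ(γ-1/2)·z·M(γ+1, 5/2, z) + √π/Γ(γ)·z^(-1/2)·(M(γ-1/2, -1/2, z) - M(γ-1/2, 1/2, z))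
  + 2√π/Γ(γ-1/2)·M(γ, 3/2, z)`,
the two `z^(-1/2)` singularities having merged since `2γ·Γ(3/2)/Γ(γ+1) = Γ(1/2)/Γ(γ)`.
The coefficients of every series `M(γ, β, ·)` are absolutely summable (their ratios are `O(1/n)`),
so `M(γ, β, ·)` is continuous at `0` with value `1`, and the difference of two such series is
`O(z)`. Hence the middle term is `O(z^(1/2))` and only `2√π/Γ(γ-1/2)` survives.
-/

open Real Filter Polynomial

/-- Confluent hypergeometric function of the first kind,
`M(γ,β,z) = ∑ (γ)⁽ⁿ⁾ zⁿ / ((β)⁽ⁿ⁾ n!)`. -/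
noncomputable def M (γ β z : ℝ) : ℝ :=
  ∑' n : ℕ, ((ascPochhammer ℝ n).eval γ * z ^ n) /
    ((ascPochhammer ℝ n).eval β * (Nat.factorial n : ℝ))

/-- Confluent hypergeometric function of the second kind (for `z > 0`). -/
noncomputable def U (γ β z : ℝ) : ℝ :=
  Real.Gamma (1 - β) / Real.Gamma (γ - β + 1) * M γ β z +
    Real.Gamma (β - 1) / Real.Gamma γ * z ^ (1 - β) * M (γ - β + 1) (2 - β) z

open Topology

lemma continuousOn_tsum_mul_pow {c : ℕ → ℝ} (hc : Summable fun n => ‖c n‖) :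
    ContinuousOn (fun z => ∑' n, c n * z ^ n) (Set.Icc (-1) 1) := by
  refine continuousOn_tsum (fun n => (continuous_const.mul (continuous_pow n)).continuousOn) hc ?_
  intro n z hz
  rw [norm_mul, norm_pow]
  exact mul_le_of_le_one_right (norm_nonneg _) (pow_le_one₀ (norm_nonneg _) (abs_le.2 hz))

lemma summable_mul_pow {c : ℕ → ℝ} (hc : Summable fun n => ‖c n‖) {z : ℝ}
    (hz : z ∈ Set.Icc (-1) 1) : Summable fun n => c n * z ^ n := by
  refine hc.of_norm_bounded fun n => ?_
  rw [norm_mul, norm_pow]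
  exact mul_le_of_le_one_right (norm_nonneg _) (pow_le_one₀ (norm_nonneg _) (abs_le.2 hz))

lemma tsum_mul_pow_eq_mul_tsum_succ {c : ℕ → ℝ} {z : ℝ} (hs : Summable fun n => c n * z ^ n)
    (h0 : c 0 = 0) : ∑' n, c n * z ^ n = z * ∑' n, c (n + 1) * z ^ n := by
  rw [hs.tsum_eq_zero_add, h0, zero_mul, zero_add, ← tsum_mul_left]
  congr 1 with n
  ring

noncomputable def hypergeomCoeff (γ β : ℝ) (n : ℕ) : ℝ :=
  (ascPochhammer ℝ n).eval γ / ((ascPochhammer ℝ n).eval β * (n.factorial : ℝ))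

lemma hypergeomCoeff_zero (γ β : ℝ) : hypergeomCoeff γ β 0 = 1 := by
  simp [hypergeomCoeff]

lemma hypergeomCoeff_succ (γ β : ℝ) (n : ℕ) :
    hypergeomCoeff γ β (n + 1) = hypergeomCoeff γ β n * ((γ + n) / ((β + n) * (n + 1))) := by
  rw [hypergeomCoeff, hypergeomCoeff, div_mul_div_comm, ascPochhammer_succ_eval,
    ascPochhammer_succ_eval, Nat.factorial_succ, Nat.cast_mul]
  push_cast
  ring_nf

/-- The ratio of consecutive coefficients is `O(1/n)`. Should some `(β)⁽ⁿ⁾` vanish, all later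
coefficients are `0` by the convention `x / 0 = 0`. -/
lemma summable_norm_hypergeomCoeff (γ β : ℝ) : Summable fun n => ‖hypergeomCoeff γ β n‖ := by
  refine summable_of_ratio_norm_eventually_le (r := 1 / 2) (by norm_num) ?_
  filter_upwards [eventually_ge_atTop ⌈|γ| + |β| + 4⌉₊] with n hn
  have hn' : |γ| + |β| + 4 ≤ (n : ℝ) := (Nat.le_ceil _).trans (by exact_mod_cast hn)
  have hγn : |γ + n| ≤ |γ| + n := (abs_add_le _ _).trans (by rw [Nat.abs_cast])
  have hβn : (n : ℝ) - |β| ≤ |β + n| := by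
    have := abs_sub_abs_le_abs_sub (n : ℝ) (-β)
    rw [Nat.abs_cast, abs_neg, sub_neg_eq_add, add_comm] at this
    exact this
  have hratio : |γ + n| / (|β + n| * (n + 1)) ≤ 1 / 2 := by
    have hβn_pos : 0 < |β + n| := by linarith [abs_nonneg γ]
    rw [div_le_iff₀ (by positivity)]
    nlinarith [abs_nonneg γ, abs_nonneg β]
  rw [norm_norm, norm_norm, hypergeomCoeff_succ, norm_mul, norm_div, norm_mul,
    Real.norm_of_nonneg (by positivity : (0 : ℝ) ≤ n + 1), mul_comm (1 / 2 : ℝ)]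
  exact mul_le_mul_of_nonneg_left hratio (norm_nonneg _)

lemma M_eq_tsum (γ β z : ℝ) : M γ β z = ∑' n, hypergeomCoeff γ β n * z ^ n := by
  simp only [M, hypergeomCoeff, div_mul_eq_mul_div]

lemma M_zero (γ β : ℝ) : M γ β 0 = 1 := by
  rw [M_eq_tsum, tsum_eq_single 0 fun n hn => by simp [zero_pow hn]]
  simp [hypergeomCoeff_zero]

lemma tendsto_M_zero (γ β : ℝ) : Tendsto (M γ β) (𝓝 0) (𝓝 1) := by
  have hcont : ContinuousAt (M γ β) 0 := by
    simp only [funext (M_eq_tsum γ β)]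
    exact (continuousOn_tsum_mul_pow (summable_norm_hypergeomCoeff γ β)).continuousAt
      (Icc_mem_nhds (by norm_num) (by norm_num))
  simpa only [M_zero] using hcont.tendsto

lemma M_sub_M_eq_mul_tsum (γ β β' : ℝ) {z : ℝ} (hz : z ∈ Set.Icc (-1) 1) :
    M γ β z - M γ β' z =
      z * ∑' n, (hypergeomCoeff γ β (n + 1) - hypergeomCoeff γ β' (n + 1)) * z ^ n := by
  have hs := summable_mul_pow (summable_norm_hypergeomCoeff γ β) hz
  have hs' := summable_mul_pow (summable_norm_hypergeomCoeff γ β') hz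
  rw [M_eq_tsum, M_eq_tsum, ← hs.tsum_sub hs']
  simp_rw [← sub_mul]
  exact tsum_mul_pow_eq_mul_tsum_succ (by simpa only [sub_mul] using hs.sub hs')
    (by simp only [hypergeomCoeff_zero, sub_self])

/-- Both series start with `1`, so their difference is `O(z)` and beats `z ^ (-1/2)`. -/
lemma tendsto_rpow_neg_half_mul_M_sub_M (γ β β' : ℝ) :
    Tendsto (fun z => z ^ (-(1 / 2) : ℝ) * (M γ β z - M γ β' z)) (𝓝[>] 0) (𝓝 0) := by
  set h : ℝ → ℝ :=
    fun z => ∑' n, (hypergeomCoeff γ β (n + 1) - hypergeomCoeff γ β' (n + 1)) * z ^ n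
  have hh : ContinuousAt h 0 := by
    have hc : Summable fun n => ‖hypergeomCoeff γ β (n + 1) - hypergeomCoeff γ β' (n + 1)‖ :=
      .of_nonneg_of_le (fun _ => norm_nonneg _) (fun _ => norm_sub_le _ _)
        (((summable_nat_add_iff 1).2 (summable_norm_hypergeomCoeff γ β)).add
          ((summable_nat_add_iff 1).2 (summable_norm_hypergeomCoeff γ β')))
    exact (continuousOn_tsum_mul_pow hc).continuousAt (Icc_mem_nhds (by norm_num) (by norm_num))
  have hsqrt : Tendsto (fun z : ℝ => z ^ (1 / 2 : ℝ)) (𝓝 0) (𝓝 0) := by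
    simpa using (continuous_rpow_const (by norm_num : (0 : ℝ) ≤ 1 / 2)).tendsto 0
  have hlim : Tendsto (fun z => z ^ (1 / 2 : ℝ) * h z) (𝓝[>] 0) (𝓝 0) := by
    simpa using (hsqrt.mul hh.tendsto).mono_left nhdsWithin_le_nhds
  refine hlim.congr' ?_
  filter_upwards [Ioo_mem_nhdsGT one_pos] with z hz
  rw [M_sub_M_eq_mul_tsum γ β β' ⟨by linarith [hz.1], hz.2.le⟩, ← mul_assoc,
    ← Real.rpow_add_one hz.1.ne', show -(1 / 2 : ℝ) + 1 = 1 / 2 by norm_num]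

lemma two_mul_mul_U_sub_U {γ z : ℝ} (hγ : γ ≠ 0) (hz : 0 < z) :
    2 * γ * z * U (γ + 1) (5 / 2) z - U γ (3 / 2) z =
      2 * γ * Gamma (-(3 / 2)) / Gamma (γ - 1 / 2) * (z * M (γ + 1) (5 / 2) z) +
      √π / Gamma γ *
        (z ^ (-(1 / 2) : ℝ) * (M (γ - 1 / 2) (-(1 / 2)) z - M (γ - 1 / 2) (1 / 2) z)) +
      2 * √π / Gamma (γ - 1 / 2) * M γ (3 / 2) z := by
  have hΓ32 : Gamma (3 / 2) = √π / 2 := by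
    rw [show (3 / 2 : ℝ) = 1 / 2 + 1 by norm_num, Gamma_add_one (by norm_num), Gamma_one_half_eq]
    ring
  have hΓm12 : Gamma (-(1 / 2)) = -2 * √π := by
    have h := Gamma_add_one (show (-(1 / 2) : ℝ) ≠ 0 by norm_num)
    rw [show (-(1 / 2) : ℝ) + 1 = 1 / 2 by norm_num, Gamma_one_half_eq] at h
    linarith
  have hrpow : z ^ (-(3 / 2) : ℝ) = z ^ (-(1 / 2) : ℝ) / z := by
    rw [eq_div_iff hz.ne', ← Real.rpow_add_one hz.ne']
    norm_num
  simp only [U]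
  rw [show γ + 1 - 5 / 2 + 1 = γ - 1 / 2 by ring, show γ - 3 / 2 + 1 = γ - 1 / 2 by ring,
    show (2 : ℝ) - 5 / 2 = -(1 / 2) by norm_num, show (2 : ℝ) - 3 / 2 = 1 / 2 by norm_num,
    show (1 : ℝ) - 5 / 2 = -(3 / 2) by norm_num, show (1 : ℝ) - 3 / 2 = -(1 / 2) by norm_num,
    show (5 / 2 : ℝ) - 1 = 3 / 2 by norm_num, show (3 / 2 : ℝ) - 1 = 1 / 2 by norm_num,
    hΓ32, hΓm12, Gamma_one_half_eq, Gamma_add_one hγ, hrpow]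
  -- `Γ` vanishes at the poles, and then both singular terms are `0` by `x / 0 = 0`.
  by_cases hG : Gamma γ = 0
  · simp only [hG, mul_zero, div_zero, zero_mul, add_zero]
    ring
  · field_simp
    ring

lemma tendsto_two_mul_mul_U_sub_U {γ : ℝ} (hγ : γ ≠ 0) :
    Tendsto (fun z => 2 * γ * z * U (γ + 1) (5 / 2) z - U γ (3 / 2) z) (𝓝[>] 0)
      (𝓝 (2 * √π / Gamma (γ - 1 / 2))) := by
  have hzM : Tendsto (fun z => z * M (γ + 1) (5 / 2) z) (𝓝[>] 0) (𝓝 0) := by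
    simpa using (tendsto_id.mul (tendsto_M_zero (γ + 1) (5 / 2))).mono_left nhdsWithin_le_nhds
  have hM : Tendsto (M γ (3 / 2)) (𝓝[>] 0) (𝓝 1) :=
    (tendsto_M_zero γ (3 / 2)).mono_left nhdsWithin_le_nhds
  have h := ((hzM.const_mul (2 * γ * Gamma (-(3 / 2)) / Gamma (γ - 1 / 2))).add
    ((tendsto_rpow_neg_half_mul_M_sub_M (γ - 1 / 2) (-(1 / 2)) (1 / 2)).const_mul
      (√π / Gamma γ))).add (hM.const_mul (2 * √π / Gamma (γ - 1 / 2)))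
  rw [mul_zero, mul_zero, add_zero, zero_add, mul_one] at h
  refine h.congr' ?_
  filter_upwards [self_mem_nhdsWithin] with z hz
  exact (two_mul_mul_U_sub_U hγ hz).symm

theorem stmt_16 (α : ℝ) (hα : 1 / 2 < α) :
    Tendsto
      (fun y : ℝ =>
        α * y ^ 2 * U (α / (2 * α - 1) + 1) (5 / 2) (y ^ 2 * (2 * α - 1) / 2) -
          U (α / (2 * α - 1)) (3 / 2) (y ^ 2 * (2 * α - 1) / 2))
      (nhdsWithin 0 (Set.Ioi (0 : ℝ)))
      (nhds (2 * Real.sqrt Real.pi / Real.Gamma (α / (2 * α - 1) - 1 / 2))) := by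
  have h2α : 0 < 2 * α - 1 := by linarith
  have hγ : α / (2 * α - 1) ≠ 0 := (div_pos (by linarith) h2α).ne'
  have hz : Tendsto (fun y : ℝ => y ^ 2 * (2 * α - 1) / 2) (𝓝[>] 0) (𝓝[>] 0) := by
    refine tendsto_nhdsWithin_of_tendsto_nhds_of_eventually_within _ ?_ ?_
    · exact (Continuous.tendsto' (by fun_prop) 0 0 (by simp)).mono_left nhdsWithin_le_nhds
    · filter_upwards [self_mem_nhdsWithin] with y (hy : 0 < y)
      exact div_pos (mul_pos (pow_pos hy 2) h2α) two_pos
  refine ((tendsto_two_mul_mul_U_sub_U hγ).comp hz).congr fun y => ?_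
  have hαy : 2 * (α / (2 * α - 1)) * (y ^ 2 * (2 * α - 1) / 2) = α * y ^ 2 := by
    field_simp
  simp only [Function.comp_apply, hαy]
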